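/- Suppose q > μ, fix ε₂ ∈ ℝ, and let g : (−∞, ε₂) → (0, k*) be the (unique) continuously differentiable solution of g'(s) = 1 − Z(g(s))/(q·W(g(s))) with lim_{s↑ε₂} g(s) = 0 and lim_{s→−∞} g(s) = k*. Then the map s ↦ s − g(s) is strictly increasing on (−∞, ε₂), tends to −∞ as s → −∞ and to ε₂ as s ↑ ε₂. Consequently, for every ε₁ < ε₂ there exists a unique A ∈ (−∞, ε₂) with A − g(A) = ε₁; moreover A > ε₁. -/

import Mathlib

open Real Filter Set MeasureTheory

noncomputable def dlt (σ μ q : ℝ) : ℝ := Real.sqrt ((μ / σ ^ 2 - 1 / 2) ^ 2 + 2 * q / σ ^ 2)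

noncomputable def gma (σ μ : ℝ) : ℝ := 1 / 2 - μ / σ ^ 2

noncomputable def gma1 (σ μ q : ℝ) : ℝ := gma σ μ - dlt σ μ q

noncomputable def gma2 (σ μ q : ℝ) : ℝ := gma σ μ + dlt σ μ q

/-- The scale function `W^{(q)}` of `X_t = (μ - σ²/2) t + σ B_t`. -/
noncomputable def W (σ μ q : ℝ) (x : ℝ) : ℝ :=
  if 0 ≤ x then 2 / (σ ^ 2 * dlt σ μ q) * Real.exp (gma σ μ * x) * Real.sinh (dlt σ μ q * x)
  else 0

/-- The scale function `Z^{(q)}` of `X_t = (μ - σ²/2) t + σ B_t`. -/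
noncomputable def Z (σ μ q : ℝ) (x : ℝ) : ℝ :=
  if 0 ≤ x then
    Real.exp (gma σ μ * x) * Real.cosh (dlt σ μ q * x)
      - gma σ μ / dlt σ μ q * Real.exp (gma σ μ * x) * Real.sinh (dlt σ μ q * x)
  else 1

/-- `k* = (γ₂ - γ₁)⁻¹ log((1 - 1/γ₁)/(1 - 1/γ₂))`. -/
noncomputable def kstar (σ μ q : ℝ) : ℝ :=
  (gma2 σ μ q - gma1 σ μ q)⁻¹ *
    Real.log ((1 - 1 / gma1 σ μ q) / (1 - 1 / gma2 σ μ q))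

open Topology

/-! The ODE gives `(s - g s)' = Z(g s) / (q W(g s))`, and both scale functions are positive on
`(0, ∞)` (for `Z` because `|γ| < δ`), so `s ↦ s - g s` is strictly increasing. Since `g > 0`
it lies below the identity at `-∞`, and since `g → 0` at `ε₂` it tends to `ε₂` there; the
intermediate value theorem then gives a unique solution `A` of `A - g A = ε₁`, and `A > ε₁`
because `g A > 0`. -/

theorem dlt_pos {σ q : ℝ} (μ : ℝ) (hσ : σ ≠ 0) (hq : 0 < q) : 0 < dlt σ μ q :=
  Real.sqrt_pos.mpr (by positivity)

theorem abs_gma_lt_dlt {σ q : ℝ} (μ : ℝ) (hσ : σ ≠ 0) (hq : 0 < q) :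
    |gma σ μ| < dlt σ μ q := by
  have hsq : gma σ μ ^ 2 < (μ / σ ^ 2 - 1 / 2) ^ 2 + 2 * q / σ ^ 2 := by
    have : 0 < 2 * q / σ ^ 2 := by positivity
    unfold gma
    nlinarith
  rw [← Real.sqrt_sq_eq_abs]
  exact Real.sqrt_lt_sqrt (sq_nonneg _) hsq

theorem W_pos {σ q x : ℝ} (μ : ℝ) (hσ : σ ≠ 0) (hq : 0 < q) (hx : 0 < x) :
    0 < W σ μ q x := by
  have hδ := dlt_pos μ hσ hq
  have : 0 < Real.sinh (dlt σ μ q * x) := Real.sinh_pos_iff.mpr (by positivity)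
  rw [W, if_pos hx.le]
  positivity

theorem Z_pos {σ q x : ℝ} (μ : ℝ) (hσ : σ ≠ 0) (hq : 0 < q) (hx : 0 < x) :
    0 < Z σ μ q x := by
  have hδ := dlt_pos μ hσ hq
  have hsinh : 0 < Real.sinh (dlt σ μ q * x) := Real.sinh_pos_iff.mpr (by positivity)
  have hγ := abs_lt.mp (abs_gma_lt_dlt μ hσ hq)
  have hcosh : gma σ μ / dlt σ μ q * Real.sinh (dlt σ μ q * x) < Real.cosh (dlt σ μ q * x) := by
    rw [div_mul_eq_mul_div, div_lt_iff₀ hδ]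
    nlinarith [Real.sinh_lt_cosh (dlt σ μ q * x)]
  rw [Z, if_pos hx.le]
  have := mul_pos (Real.exp_pos (gma σ μ * x)) (sub_pos.mpr hcosh)
  linarith

theorem StrictMonoOn.existsUnique_lt_eq_of_tendsto
    {α δ : Type*} [ConditionallyCompleteLinearOrder α] [TopologicalSpace α] [OrderTopology α]
    [DenselyOrdered α] [NoMinOrder α] [LinearOrder δ] [TopologicalSpace δ] [OrderClosedTopology δ]
    {f : α → δ} {b : α} {c : δ} (hmono : StrictMonoOn f (Iio b)) (hcont : ContinuousOn f (Iio b))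
    (hbot : Tendsto f atBot atBot) (hb : Tendsto f (𝓝[<] b) (𝓝 c)) {y : δ} (hy : y < c) :
    ∃! x, x < b ∧ f x = y := by
  obtain ⟨x₀, hx₀y, hx₀b⟩ :=
    ((hbot.eventually (eventually_le_atBot y)).and (eventually_lt_atBot b)).exists
  obtain ⟨x₁, hyx₁, hx₁b⟩ :=
    ((hb.eventually (eventually_gt_nhds hy)).and self_mem_nhdsWithin).exists
  have hx₀x₁ : x₀ ≤ x₁ := (hmono.le_iff_le hx₀b hx₁b).mp (hx₀y.trans hyx₁.le)
  have hsub : Icc x₀ x₁ ⊆ Iio b := fun x hx => hx.2.trans_lt hx₁b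
  obtain ⟨x, hx, hfx⟩ := intermediate_value_Icc hx₀x₁ (hcont.mono hsub) ⟨hx₀y, hyx₁.le⟩
  exact ⟨x, ⟨hsub hx, hfx⟩, fun x' hx' => hmono.injOn hx'.1 (hsub hx) (hx'.2.trans hfx.symm)⟩

theorem stmt_16_general (σ μ q ε₂ : ℝ) (hσ : 0 < σ) (hq : 0 < q)
    (g : ℝ → ℝ)
    (hmem : ∀ s ∈ Set.Iio ε₂, g s ∈ Set.Ioo 0 (kstar σ μ q))
    (hode : ∀ s ∈ Set.Iio ε₂, HasDerivAt g (1 - Z σ μ q (g s) / (q * W σ μ q (g s))) s)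
    (hlim0 : Filter.Tendsto g (nhdsWithin ε₂ (Set.Iio ε₂)) (nhds 0)) :
    StrictMonoOn (fun s => s - g s) (Set.Iio ε₂) ∧
    Filter.Tendsto (fun s => s - g s) Filter.atBot Filter.atBot ∧
    Filter.Tendsto (fun s => s - g s) (nhdsWithin ε₂ (Set.Iio ε₂)) (nhds ε₂) ∧
    ∀ ε₁ : ℝ, ε₁ < ε₂ →
      (∃! A : ℝ, A < ε₂ ∧ A - g A = ε₁) ∧
      ∀ A : ℝ, A < ε₂ → A - g A = ε₁ → ε₁ < A := by
  have hg_pos : ∀ s ∈ Iio ε₂, 0 < g s := fun s hs => (hmem s hs).1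
  have hderiv : ∀ s ∈ Iio ε₂,
      HasDerivAt (fun s => s - g s) (Z σ μ q (g s) / (q * W σ μ q (g s))) s := fun s hs =>
    ((hasDerivAt_id s).sub (hode s hs)).congr_deriv (by ring)
  have hcont : ContinuousOn (fun s => s - g s) (Iio ε₂) :=
    fun s hs => (hderiv s hs).continuousAt.continuousWithinAt
  have hmono : StrictMonoOn (fun s => s - g s) (Iio ε₂) := by
    refine strictMonoOn_of_hasDerivWithinAt_pos (convex_Iio ε₂) hcont
      (fun s hs => (hderiv s (interior_subset hs)).hasDerivWithinAt) fun s hs => ?_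
    have hs' := hg_pos s (interior_subset hs)
    exact div_pos (Z_pos μ hσ.ne' hq hs') (mul_pos hq (W_pos μ hσ.ne' hq hs'))
  have hbot : Tendsto (fun s => s - g s) atBot atBot :=
    tendsto_atBot_mono' atBot
      ((eventually_lt_atBot ε₂).mono fun s hs => by dsimp only [id]; linarith [hg_pos s hs]) tendsto_id
  have hleft : Tendsto (fun s => s - g s) (𝓝[<] ε₂) (𝓝 ε₂) := by
    simpa using (tendsto_id.mono_left nhdsWithin_le_nhds).sub hlim0
  refine ⟨hmono, hbot, hleft, fun ε₁ hε₁ =>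
    ⟨hmono.existsUnique_lt_eq_of_tendsto hcont hbot hleft hε₁, fun A hA hA₁ => ?_⟩⟩
  linarith [hg_pos A hA]

theorem stmt_16 (σ μ q ε₂ : ℝ) (hσ : 0 < σ) (hq : 0 < q) (hqμ : μ < q)
    (g : ℝ → ℝ)
    (hmem : ∀ s ∈ Set.Iio ε₂, g s ∈ Set.Ioo 0 (kstar σ μ q))
    (hg : ContDiffOn ℝ 1 g (Set.Iio ε₂))
    (hode : ∀ s ∈ Set.Iio ε₂, HasDerivAt g (1 - Z σ μ q (g s) / (q * W σ μ q (g s))) s)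
    (hlim0 : Filter.Tendsto g (nhdsWithin ε₂ (Set.Iio ε₂)) (nhds 0))
    (hlimk : Filter.Tendsto g Filter.atBot (nhds (kstar σ μ q))) :
    StrictMonoOn (fun s => s - g s) (Set.Iio ε₂) ∧
    Filter.Tendsto (fun s => s - g s) Filter.atBot Filter.atBot ∧
    Filter.Tendsto (fun s => s - g s) (nhdsWithin ε₂ (Set.Iio ε₂)) (nhds ε₂) ∧
    ∀ ε₁ : ℝ, ε₁ < ε₂ →
      (∃! A : ℝ, A < ε₂ ∧ A - g A = ε₁) ∧
      ∀ A : ℝ, A < ε₂ → A - g A = ε₁ → ε₁ < A :=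
  stmt_16_general σ μ q ε₂ hσ hq g hmem hode hlim0
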